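/- arXiv:math/9807051 — 3 statements merged into one kernel-verified Lean document; each statement's English description precedes it below -/
import Mathlib

section
/- The 4×4 upper triangular matrix R̄ with 1's on the diagonal and entries R̄₁₂ = h+g, R̄₁₃ = −h−g, R̄₁₄ = h²−g², R̄₂₄ = h−g, R̄₃₄ = −h+g (all other off-diagonal entries zero) satisfies the quantum Yang–Baxter equation R̄₁₂ R̄₁₃ R̄₂₃ = R̄₂₃ R̄₁₃ R̄₁₂ on (k²)⊗³ ≅ k⁸, for all scalars h, g in a commutative ring. -/
open Matrix
open Fin.NatCast

/-- R̄ with 1's on the diagonal and entries (1,2)=h+g, (1,3)=−h−g, (1,4)=h²−g²,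
(2,4)=h−g, (3,4)=−h+g, regarded as an operator on k²⊗k² via the identification
e₁=(0,0), e₂=(0,1), e₃=(1,0), e₄=(1,1). -/
def Rbar {k : Type*} [CommRing k] (h g : k) :
    Matrix (Fin 2 × Fin 2) (Fin 2 × Fin 2) k :=
  fun p q =>
    (!![1, h+g, -h-g, h^2-g^2;
        0, 1,   0,    h-g;
        0, 0,   1,    -h+g;
        0, 0,   0,    1] : Matrix (Fin 4) (Fin 4) k)
      (2 * p.1 + p.2 : Fin 4) (2 * q.1 + q.2 : Fin 4)

/-- A₁₂ = A⊗I₂ acting on the first two tensor factors of (k²)⊗³. -/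
def leg12 {k : Type*} [CommRing k] (A : Matrix (Fin 2 × Fin 2) (Fin 2 × Fin 2) k) :
    Matrix (Fin 2 × Fin 2 × Fin 2) (Fin 2 × Fin 2 × Fin 2) k :=
  fun p q => if p.2.2 = q.2.2 then A (p.1, p.2.1) (q.1, q.2.1) else 0

/-- A₂₃ = I₂⊗A acting on the last two tensor factors of (k²)⊗³. -/
def leg23 {k : Type*} [CommRing k] (A : Matrix (Fin 2 × Fin 2) (Fin 2 × Fin 2) k) :
    Matrix (Fin 2 × Fin 2 × Fin 2) (Fin 2 × Fin 2 × Fin 2) k :=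
  fun p q => if p.1 = q.1 then A p.2 q.2 else 0

/-- A₁₃ acting on the first and third tensor factors of (k²)⊗³. -/
def leg13 {k : Type*} [CommRing k] (A : Matrix (Fin 2 × Fin 2) (Fin 2 × Fin 2) k) :
    Matrix (Fin 2 × Fin 2 × Fin 2) (Fin 2 × Fin 2 × Fin 2) k :=
  fun p q => if p.2.1 = q.2.1 then A (p.1, p.2.2) (q.1, q.2.2) else 0

section Legs

variable {k : Type*} [CommRing k] (A B C : Matrix (Fin 2 × Fin 2) (Fin 2 × Fin 2) k)

theorem leg12_mul_leg13_mul_leg23_apply (a b c d e f : Fin 2) :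
    (leg12 A * leg13 B * leg23 C) (a, b, c) (d, e, f) =
      ∑ x, ∑ y, ∑ z, A (a, b) (x, y) * B (x, c) (d, z) * C (y, z) (e, f) := by
  simp [mul_apply, leg12, leg13, leg23, Fintype.sum_prod_type]
  ring

theorem leg23_mul_leg13_mul_leg12_apply (a b c d e f : Fin 2) :
    (leg23 C * leg13 B * leg12 A) (a, b, c) (d, e, f) =
      ∑ x, ∑ y, ∑ z, C (b, c) (y, z) * B (a, z) (x, f) * A (x, y) (d, e) := by
  simp [mul_apply, leg12, leg13, leg23, Fintype.sum_prod_type]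
  ring

end Legs

theorem Rbar_apply {k : Type*} [CommRing k] (h g : k) (a b c d : Fin 2) :
    Rbar h g (a, b) (c, d) =
      ![![![![1, h + g], ![-h - g, h ^ 2 - g ^ 2]], ![![0, 1], ![0, h - g]]],
        ![![![0, 0], ![1, -h + g]], ![![0, 0], ![0, 1]]]] a b c d := by
  fin_cases a <;> fin_cases b <;> fin_cases c <;> fin_cases d <;> rfl

theorem Rbar_yangBaxter_apply {k : Type*} [CommRing k] (h g : k) (a b c d e f : Fin 2) :
    ∑ x, ∑ y, ∑ z, Rbar h g (a, b) (x, y) * Rbar h g (x, c) (d, z) * Rbar h g (y, z) (e, f) =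
      ∑ x, ∑ y, ∑ z, Rbar h g (b, c) (y, z) * Rbar h g (a, z) (x, f) * Rbar h g (x, y) (d, e) := by
  simp only [Rbar_apply, Fin.sum_univ_two]
  fin_cases a <;> fin_cases b <;> fin_cases c <;> fin_cases d <;> fin_cases e <;> fin_cases f <;>
    simp <;> ring

/-- R̄ satisfies the quantum Yang–Baxter equation R̄₁₂ R̄₁₃ R̄₂₃ = R̄₂₃ R̄₁₃ R̄₁₂
on (k²)⊗³ ≅ k⁸, for all scalars h, g in a commutative ring. -/
theorem Rbar_QYBE (k : Type*) [CommRing k] (h g : k) :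
    leg12 (Rbar h g) * leg13 (Rbar h g) * leg23 (Rbar h g) =
      leg23 (Rbar h g) * leg13 (Rbar h g) * leg12 (Rbar h g) := by
  ext ⟨a, b, c⟩ ⟨d, e, f⟩
  rw [leg12_mul_leg13_mul_leg23_apply, leg23_mul_leg13_mul_leg12_apply, Rbar_yangBaxter_apply]
end

section
/- The full 9×9 R-matrix R = (1) ⊕ Ř ⊕ Ř⁻¹ ⊕ R̄ (block diagonal with blocks of sizes 1, 2, 2, 4, where Ř = [[1,2g],[0,1]] and R̄ = R̄(h,g) as above) satisfies R·(PRP) = I₉ where P is the appropriate permutation matrix implementing the graded flip on the blocks — i.e., R is triangular: R₂₁ R = 1, with R₂₁ the graded-flip conjugate. Equivalently, verify the block-wise statement: Ř⁻¹ = flip-conjugate of Ř gives Ř·Ř' = I with Ř' = [[1,−2g],[0,1]] = Ř⁻¹ and P R̄ P · R̄ = I₄. -/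
open Matrix

/-- The blocks of the 9×9 R-matrix R = (1) ⊕ Ř ⊕ Ř⁻¹ ⊕ R̄ are triangular:
Ř·Ř⁻¹ = I₂ with Ř = [[1,2g],[0,1]], Ř⁻¹ = [[1,−2g],[0,1]], and
P R̄(h,g) P · R̄(h,g) = I₄ with P the 4×4 flip matrix. -/
theorem R_blocks_triangular (k : Type*) [CommRing k] (h g : k) :
    let Rc : Matrix (Fin 2) (Fin 2) k := !![1, 2*g; 0, 1]
    let Rcinv : Matrix (Fin 2) (Fin 2) k := !![1, -(2*g); 0, 1]
    let Rb : Matrix (Fin 4) (Fin 4) k :=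
      !![1, h+g, -h-g, h^2-g^2;
         0, 1,   0,    h-g;
         0, 0,   1,    -h+g;
         0, 0,   0,    1]
    let P : Matrix (Fin 4) (Fin 4) k :=
      !![1, 0, 0, 0;
         0, 0, 1, 0;
         0, 1, 0, 0;
         0, 0, 0, 1]
    Rc * Rcinv = 1 ∧ Rcinv * Rc = 1 ∧ P * Rb * P * Rb = 1 := by
  refine ⟨?_, ?_, ?_⟩ <;>
  · ext i j
    fin_cases i <;> fin_cases j <;>
      simp [Matrix.mul_apply, Fin.sum_univ_succ] <;> ring
end

section
/- The braid matrix B = P·R̄(h,g) satisfies the braid relation (B⊗I₂)(I₂⊗B)(B⊗I₂) = (I₂⊗B)(B⊗I₂)(I₂⊗B) as 8×8 matrices. -/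
open Matrix
open Fin.NatCast

/-- The flip P on k²⊗k², P(x⊗y) = y⊗x. -/
def flipP {k : Type*} [CommRing k] :
    Matrix (Fin 2 × Fin 2) (Fin 2 × Fin 2) k :=
  fun p q => if p.1 = q.2 ∧ p.2 = q.1 then 1 else 0

def Bmat {k : Type*} [CommRing k] (h g : k) :
    Matrix (Fin 2 × Fin 2) (Fin 2 × Fin 2) k := fun p q =>
  match p.1.val, p.2.val, q.1.val, q.2.val with
  | 0,0,0,0 => 1 | 0,0,0,1 => h+g | 0,0,1,0 => -h-g | 0,0,1,1 => h^2-g^2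
  | 0,1,1,0 => 1 | 0,1,1,1 => -h+g
  | 1,0,0,1 => 1 | 1,0,1,1 => h-g
  | 1,1,1,1 => 1
  | _,_,_,_ => 0

set_option maxHeartbeats 1000000 in
theorem hB' {k : Type*} [CommRing k] (h g : k) : flipP * Rbar h g = Bmat h g := by
  ext ⟨a, b⟩ ⟨c, d⟩
  fin_cases a <;> fin_cases b <;> fin_cases c <;> fin_cases d <;>
    simp [Matrix.mul_apply, Fintype.sum_prod_type, Fin.sum_univ_two, flipP, Rbar, Bmat,
      Matrix.vecHead, Matrix.vecTail]

def Lmat {k : Type*} [CommRing k] (h g : k) :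
    Matrix (Fin 2 × Fin 2 × Fin 2) (Fin 2 × Fin 2 × Fin 2) k := fun p q =>
  (![![![![![![1, 0], ![(g + h), 0]], ![![(-g - h), 0], ![(-g^2 + h^2), 0]]], ![![![0, 1], ![0, (g + h)]], ![![0, (-g - h)], ![0, (-g^2 + h^2)]]]], ![![![![0, 0], ![0, 0]], ![![1, 0], ![(g - h), 0]]], ![![![0, 0], ![0, 0]], ![![0, 1], ![0, (g - h)]]]]], ![![![![![0, 0], ![1, 0]], ![![0, 0], ![(-g + h), 0]]], ![![![0, 0], ![0, 1]], ![![0, 0], ![0, (-g + h)]]]], ![![![![0, 0], ![0, 0]], ![![0, 0], ![1, 0]]], ![![![0, 0], ![0, 0]], ![![0, 0], ![0, 1]]]]]]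
   : Fin 2 → Fin 2 → Fin 2 → Fin 2 → Fin 2 → Fin 2 → k) p.1 p.2.1 p.2.2 q.1 q.2.1 q.2.2

def Mmat {k : Type*} [CommRing k] (h g : k) :
    Matrix (Fin 2 × Fin 2 × Fin 2) (Fin 2 × Fin 2 × Fin 2) k := fun p q =>
  (![![![![![![1, (g + h)], ![(-g - h), (-g^2 + h^2)]], ![![0, 0], ![0, 0]]], ![![![0, 0], ![1, (g - h)]], ![![0, 0], ![0, 0]]]], ![![![![0, 1], ![0, (-g + h)]], ![![0, 0], ![0, 0]]], ![![![0, 0], ![0, 1]], ![![0, 0], ![0, 0]]]]], ![![![![![0, 0], ![0, 0]], ![![1, (g + h)], ![(-g - h), (-g^2 + h^2)]]], ![![![0, 0], ![0, 0]], ![![0, 0], ![1, (g - h)]]]], ![![![![0, 0], ![0, 0]], ![![0, 1], ![0, (-g + h)]]], ![![![0, 0], ![0, 0]], ![![0, 0], ![0, 1]]]]]]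
   : Fin 2 → Fin 2 → Fin 2 → Fin 2 → Fin 2 → Fin 2 → k) p.1 p.2.1 p.2.2 q.1 q.2.1 q.2.2

def LMmat {k : Type*} [CommRing k] (h g : k) :
    Matrix (Fin 2 × Fin 2 × Fin 2) (Fin 2 × Fin 2 × Fin 2) k := fun p q =>
  (![![![![![![1, (2*g + 2*h)], ![(-g - h), (-2*g^2 + 2*h^2)]], ![![(-g - h), (-2*g^2 - 2*h*g)], ![(g^2 + 2*h*g + h^2), (2*g^3 - 2*h^2*g)]]], ![![![0, 0], ![1, 2*g]], ![![0, 0], ![(-g - h), (-2*g^2 + 2*h^2)]]]], ![![![![0, 0], ![0, 0]], ![![1, 2*g], ![(-g - h), (-2*g^2 + 2*h*g)]]], ![![![0, 0], ![0, 0]], ![![0, 0], ![1, (2*g - 2*h)]]]]], ![![![![![0, 1], ![0, (-g + h)]], ![![0, (-g + h)], ![0, (g^2 - 2*h*g + h^2)]]], ![![![0, 0], ![0, 1]], ![![0, 0], ![0, (-g + h)]]]], ![![![![0, 0], ![0, 0]], ![![0, 1], ![0, (-g + h)]]], ![![![0, 0], ![0, 0]], ![![0, 0], ![0, 1]]]]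]]
   : Fin 2 → Fin 2 → Fin 2 → Fin 2 → Fin 2 → Fin 2 → k) p.1 p.2.1 p.2.2 q.1 q.2.1 q.2.2

def MLmat {k : Type*} [CommRing k] (h g : k) :
    Matrix (Fin 2 × Fin 2 × Fin 2) (Fin 2 × Fin 2 × Fin 2) k := fun p q =>
  (![![![![![![1, (g + h)], ![(g + h), (g^2 + 2*h*g + h^2)]], ![![(-2*g - 2*h), (-2*g^2 - 2*h*g)], ![(-2*g^2 + 2*h^2), (-2*g^3 + 2*h^2*g)]]], ![![![0, 0], ![0, 0]], ![![1, (g - h)], ![(g - h), (g^2 - 2*h*g + h^2)]]]], ![![![![0, 1], ![0, (g + h)]], ![![0, (-2*g)], ![0, (-2*g^2 + 2*h*g)]]], ![![![0, 0], ![0, 0]], ![![0, 1], ![0, (g - h)]]]]], ![![![![![0, 0], ![1, (g + h)]], ![![0, 0], ![(-2*g), (-2*g^2 + 2*h^2)]]], ![![![0, 0], ![0, 0]], ![![0, 0], ![1, (g - h)]]]], ![![![![0, 0], ![0, 1]], ![![0, 0], ![0, (-2*g + 2*h)]]], ![![![0, 0], ![0, 0]], ![![0, 0], ![0, 1]]]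]]]
   : Fin 2 → Fin 2 → Fin 2 → Fin 2 → Fin 2 → Fin 2 → k) p.1 p.2.1 p.2.2 q.1 q.2.1 q.2.2

def Tmat {k : Type*} [CommRing k] (h g : k) :
    Matrix (Fin 2 × Fin 2 × Fin 2) (Fin 2 × Fin 2 × Fin 2) k := fun p q =>
  (![![![![![![1, (2*g + 2*h)], ![0, (2*h*g + 2*h^2)]], ![![(-2*g - 2*h), (-4*g^2 - 4*h*g)], ![(2*h*g + 2*h^2), 0]]], ![![![0, 0], ![0, 0]], ![![1, 2*g], ![(-2*h), (-2*h*g + 2*h^2)]]]], ![![![![0, 0], ![1, 2*g]], ![![0, 0], ![(-2*g), (-4*g^2 + 4*h*g)]]], ![![![0, 0], ![0, 0]], ![![0, 0], ![1, (2*g - 2*h)]]]]], ![![![![![0, 1], ![0, 2*h]], ![![0, (-2*g)], ![0, (-2*h*g + 2*h^2)]]], ![![![0, 0], ![0, 0]], ![![0, 1], ![0, 0]]]], ![![![![0, 0], ![0, 1]], ![![0, 0], ![0, (-2*g + 2*h)]]], ![![![0, 0], ![0, 0]], ![![0, 0], ![0, 1]]]]]]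
   : Fin 2 → Fin 2 → Fin 2 → Fin 2 → Fin 2 → Fin 2 → k) p.1 p.2.1 p.2.2 q.1 q.2.1 q.2.2

set_option maxHeartbeats 1000000 in
theorem hL {k : Type*} [CommRing k] (h g : k) : leg12 (Bmat h g) = Lmat h g := by
  ext ⟨a, b, c⟩ ⟨d, e, f⟩
  fin_cases a <;> fin_cases b <;> fin_cases c <;> fin_cases d <;> fin_cases e <;> fin_cases f <;>
    simp only [leg12, Bmat, Lmat, Fin.mk_zero, Fin.mk_one, Matrix.cons_val_zero,
      Matrix.cons_val_one, Matrix.head_cons, Fin.isValue, if_true, if_false] <;>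
      norm_num <;> ring

set_option maxHeartbeats 1000000 in
theorem hM {k : Type*} [CommRing k] (h g : k) : leg23 (Bmat h g) = Mmat h g := by
  ext ⟨a, b, c⟩ ⟨d, e, f⟩
  fin_cases a <;> fin_cases b <;> fin_cases c <;> fin_cases d <;> fin_cases e <;> fin_cases f <;>
    simp only [leg23, Bmat, Mmat, Fin.mk_zero, Fin.mk_one, Matrix.cons_val_zero,
      Matrix.cons_val_one, Matrix.head_cons, Fin.isValue, if_true, if_false] <;>
      norm_num <;> ring

set_option maxHeartbeats 4000000 in
theorem hLM {k : Type*} [CommRing k] (h g : k) : Lmat h g * Mmat h g = LMmat h g := by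
  ext ⟨a, b, c⟩ ⟨d, e, f⟩
  fin_cases a <;> fin_cases b <;> fin_cases c <;> fin_cases d <;> fin_cases e <;> fin_cases f <;>
    simp only [Matrix.mul_apply, Fintype.sum_prod_type, Fin.sum_univ_two, Lmat, Mmat, LMmat,
        Fin.mk_zero, Fin.mk_one, Matrix.cons_val_zero, Matrix.cons_val_one, Matrix.head_cons,
        mul_zero, zero_mul, mul_one, one_mul, add_zero, zero_add, neg_zero] <;> ring

set_option maxHeartbeats 4000000 in
theorem hML {k : Type*} [CommRing k] (h g : k) : Mmat h g * Lmat h g = MLmat h g := by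
  ext ⟨a, b, c⟩ ⟨d, e, f⟩
  fin_cases a <;> fin_cases b <;> fin_cases c <;> fin_cases d <;> fin_cases e <;> fin_cases f <;>
    simp [Matrix.mul_apply, Fintype.sum_prod_type, Fin.sum_univ_two, Lmat, Mmat, MLmat,
        Matrix.vecHead, Matrix.vecTail] <;> ring

set_option maxHeartbeats 4000000 in
theorem hLML {k : Type*} [CommRing k] (h g : k) : LMmat h g * Lmat h g = Tmat h g := by
  ext ⟨a, b, c⟩ ⟨d, e, f⟩
  fin_cases a <;> fin_cases b <;> fin_cases c <;> fin_cases d <;> fin_cases e <;> fin_cases f <;>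
    simp only [Matrix.mul_apply, Fintype.sum_prod_type, Fin.sum_univ_two, Lmat, LMmat, Tmat,
        Fin.mk_zero, Fin.mk_one, Matrix.cons_val_zero, Matrix.cons_val_one, Matrix.head_cons,
        mul_zero, zero_mul, mul_one, one_mul, add_zero, zero_add, neg_zero] <;> ring

set_option maxHeartbeats 4000000 in
theorem hMLM {k : Type*} [CommRing k] (h g : k) : MLmat h g * Mmat h g = Tmat h g := by
  ext ⟨a, b, c⟩ ⟨d, e, f⟩
  fin_cases a <;> fin_cases b <;> fin_cases c <;> fin_cases d <;> fin_cases e <;> fin_cases f <;>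
    simp only [Matrix.mul_apply, Fintype.sum_prod_type, Fin.sum_univ_two, Mmat, MLmat, Tmat,
        Fin.mk_zero, Fin.mk_one, Matrix.cons_val_zero, Matrix.cons_val_one, Matrix.head_cons,
        mul_zero, zero_mul, mul_one, one_mul, add_zero, zero_add, neg_zero] <;> ring

/-- The braid matrix B = P·R̄(h,g) satisfies the braid relation
(B⊗I₂)(I₂⊗B)(B⊗I₂) = (I₂⊗B)(B⊗I₂)(I₂⊗B) as 8×8 matrices. -/
theorem braid_relation_B (k : Type*) [CommRing k] (h g : k) :
    let B := flipP * Rbar h g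
    leg12 B * leg23 B * leg12 B = leg23 B * leg12 B * leg23 B := by
  intro B
  show leg12 B * leg23 B * leg12 B = leg23 B * leg12 B * leg23 B
  rw [show B = Bmat h g from hB' h g, hL, hM, hLM, hML, hLML, hMLM]
end
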